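/- Let n, q be positive integers, let X be a real n × (q+1) matrix of rank q+1, let t_1,…,t_n ∈ (0,1), ζ_1,…,ζ_n > 0, p ∈ (1,2), and φ > 0. Define D^O = diag( t_i^{2−p}·ζ_i^{2−p} ) and D^R = diag( t_i·ζ_i^{2−p} ). Then the matrices XᵀD^O X and XᵀD^R X are positive definite (hence invertible), and the matrix M = φ·(XᵀD^R X)⁻¹ − φ·(XᵀD^O X)⁻¹ is positive definite. -/

import Mathlib

/-!
Since `t < t ^ (2 - p)` for `t ∈ (0, 1)` and `p > 1`, the offset weights strictly dominate the
ratio weights, so `D^O - D^R` is positive definite. Congruence by the injective `X` preserves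
this, giving `XᵀD^R X < XᵀD^O X` in the Loewner order, and matrix inversion reverses it.
-/

open Matrix Real

theorem Matrix.mulVec_injective_of_rank_eq_card {m n K : Type*} [Field K] [Fintype n]
    {A : Matrix m n K} (hA : A.rank = Fintype.card n) : Function.Injective A.mulVec := by
  rw [mulVec_injective_iff, linearIndependent_iff_card_eq_finrank_span, Set.finrank,
    ← rank_eq_finrank_span_cols, hA]

/-- Writing `D = A - B`, the identity
`B⁻¹ - A⁻¹ = A⁻¹ D A⁻¹ + (D A⁻¹)ᴴ B⁻¹ (D A⁻¹)` exhibits the left side as a positive definite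
matrix plus a positive semidefinite one. -/
theorem Matrix.PosDef.inv_sub_inv_of_sub {n K : Type*} [Fintype n] [DecidableEq n] [Field K]
    [PartialOrder K] [StarRing K] [AddLeftMono K] {A B : Matrix n n K} (hB : B.PosDef)
    (hAB : (A - B).PosDef) : (B⁻¹ - A⁻¹).PosDef := by
  have hA : A.PosDef := by simpa using hAB.add hB
  set D := A - B
  have : Invertible A := hA.isUnit.invertible
  have : Invertible B := hB.isUnit.invertible
  have hAinv : (A⁻¹)ᴴ = A⁻¹ := hA.inv.isHermitian
  have hDH : Dᴴ = D := hAB.isHermitian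
  have h_left : B⁻¹ - A⁻¹ = A⁻¹ * D * B⁻¹ := by
    simp [D, Matrix.mul_sub, Matrix.sub_mul]
  have h_right : B⁻¹ - A⁻¹ = B⁻¹ * D * A⁻¹ := by
    simp [D, Matrix.mul_sub, Matrix.sub_mul]
  have key : B⁻¹ - A⁻¹ = (A⁻¹)ᴴ * D * A⁻¹ + (D * A⁻¹)ᴴ * B⁻¹ * (D * A⁻¹) :=
    calc B⁻¹ - A⁻¹ = A⁻¹ * D * (A⁻¹ + (B⁻¹ - A⁻¹)) := by rw [add_sub_cancel, h_left]
      _ = (A⁻¹)ᴴ * D * A⁻¹ + (D * A⁻¹)ᴴ * B⁻¹ * (D * A⁻¹) := by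
        rw [h_right, conjTranspose_mul, hAinv, hDH]; noncomm_ring
  rw [key]
  exact (hAB.conjTranspose_mul_mul_same (mulVec_injective_of_invertible _)).add_posSemidef
    (hB.inv.posSemidef.conjTranspose_mul_mul_same _)

theorem covariance_diff_posDef_general
    (n q : ℕ)
    (X : Matrix (Fin n) (Fin (q + 1)) ℝ) (hX : X.rank = q + 1)
    (t ζ : Fin n → ℝ)
    (ht0 : ∀ i, 0 < t i) (ht1 : ∀ i, t i < 1)
    (hζ : ∀ i, 0 < ζ i)
    (p : ℝ) (hp1 : 1 < p)
    (φ : ℝ) (hφ : 0 < φ)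
    (DO DR : Matrix (Fin n) (Fin n) ℝ)
    (hDO : DO = Matrix.diagonal (fun i => t i ^ (2 - p) * ζ i ^ (2 - p)))
    (hDR : DR = Matrix.diagonal (fun i => t i * ζ i ^ (2 - p))) :
    (Xᵀ * DO * X).PosDef ∧ (Xᵀ * DR * X).PosDef ∧
    (φ • (Xᵀ * DR * X)⁻¹ - φ • (Xᵀ * DO * X)⁻¹).PosDef := by
  have hinj : Function.Injective X.mulVec :=
    mulVec_injective_of_rank_eq_card (by rw [hX, Fintype.card_fin])
  have congr_pos {D : Matrix (Fin n) (Fin n) ℝ} (hD : D.PosDef) : (Xᵀ * D * X).PosDef := by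
    simpa using hD.conjTranspose_mul_mul_same hinj
  have hζp i : 0 < ζ i ^ (2 - p) := rpow_pos_of_pos (hζ i) _
  have hDO_sub_DR : (DO - DR).PosDef := by
    rw [hDO, hDR, diagonal_sub]
    refine PosDef.diagonal fun i => sub_pos.mpr (mul_lt_mul_of_pos_right ?_ (hζp i))
    exact self_lt_rpow_of_lt_one (ht0 i) (ht1 i) (by linarith)
  have hDR_pos : DR.PosDef := hDR ▸ PosDef.diagonal fun i => mul_pos (ht0 i) (hζp i)
  have hDO_pos : DO.PosDef := by simpa using hDO_sub_DR.add hDR_pos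
  refine ⟨congr_pos hDO_pos, congr_pos hDR_pos, ?_⟩
  rw [← smul_sub]
  refine PosDef.smul (PosDef.inv_sub_inv_of_sub (congr_pos hDR_pos) ?_) hφ
  simpa [Matrix.mul_sub, Matrix.sub_mul] using congr_pos hDO_sub_DR

/-- The offset and ratio Fisher information cores `XᵀD^O X`, `XᵀD^R X` are
positive definite, and the difference of the asymptotic covariance matrices
`M = φ(XᵀD^R X)⁻¹ − φ(XᵀD^O X)⁻¹` is positive definite. -/
theorem covariance_diff_posDef
    (n q : ℕ) (hn : 0 < n) (hq : 0 < q)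
    (X : Matrix (Fin n) (Fin (q + 1)) ℝ) (hX : X.rank = q + 1)
    (t ζ : Fin n → ℝ)
    (ht0 : ∀ i, 0 < t i) (ht1 : ∀ i, t i < 1)
    (hζ : ∀ i, 0 < ζ i)
    (p : ℝ) (hp1 : 1 < p) (hp2 : p < 2)
    (φ : ℝ) (hφ : 0 < φ)
    (DO DR : Matrix (Fin n) (Fin n) ℝ)
    (hDO : DO = Matrix.diagonal (fun i => t i ^ (2 - p) * ζ i ^ (2 - p)))
    (hDR : DR = Matrix.diagonal (fun i => t i * ζ i ^ (2 - p))) :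
    (Xᵀ * DO * X).PosDef ∧ (Xᵀ * DR * X).PosDef ∧
    (φ • (Xᵀ * DR * X)⁻¹ - φ • (Xᵀ * DO * X)⁻¹).PosDef :=
  covariance_diff_posDef_general n q X hX t ζ ht0 ht1 hζ p hp1 φ hφ DO DR hDO hDR
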